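/- Let $\lambda > 0$, $\tau > 0$, $\beta \ge 1/4$. Then both roots of the quadratic $(1 + \lambda\tau^2\beta) z^2 + (\lambda \tau^2(1-2\beta) - 2) z + (1 + \lambda\tau^2\beta) = 0$ have modulus at most 1. In particular, the Newmark scheme with $\gamma = 1/2$ and $\beta \ge 1/4$ is unconditionally stable for the scalar test equation $u'' + \lambda u = 0$. -/
import Mathlib


/-- Unconditional stability of the Newmark scheme with `γ = 1/2`, `β ≥ 1/4`:
both characteristic roots have modulus at most one, and all solutions of the
two-step recurrence stay bounded, for every time step `τ > 0`. -/
theorem stmt_11 (lam τ β : ℝ) (hlam : 0 < lam) (hτ : 0 < τ) (hβ : 1 / 4 ≤ β) :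
    (∀ z : ℂ,
      (1 + (lam : ℂ) * τ ^ 2 * β) * z ^ 2 +
        ((lam : ℂ) * τ ^ 2 * (1 - 2 * β) - 2) * z +
        (1 + (lam : ℂ) * τ ^ 2 * β) = 0 → ‖z‖ ≤ 1) ∧
    (∀ u : ℕ → ℝ,
      (∀ n : ℕ, (u (n + 2) - 2 * u (n + 1) + u n) / τ ^ 2 +
        lam * (β * u (n + 2) + (1 - 2 * β) * u (n + 1) + β * u n) = 0) →
      ∃ M : ℝ, ∀ n, |u n| ≤ M) := by
  set a : ℝ := 1 + lam * τ ^ 2 * β with ha_def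
  set b : ℝ := lam * τ ^ 2 * (1 - 2 * β) - 2 with hb_def
  have hτ2 : 0 < τ ^ 2 := pow_pos hτ 2
  have hcτ : 0 < lam * τ ^ 2 := mul_pos hlam hτ2
  have ha : 0 < a := by nlinarith
  have hb1 : -(2 * a) < b := by simp only [ha_def, hb_def]; nlinarith
  have hb2 : b < 2 * a := by simp only [ha_def, hb_def]; nlinarith
  constructor
  · intro z hz
    have key : (a : ℂ) * z ^ 2 + (b : ℂ) * z + (a : ℂ) = 0 := by
      push_cast [ha_def, hb_def]
      linear_combination hz
    obtain ⟨x, y⟩ := z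
    have hre : a * (x * x - y * y) + b * x + a = 0 := by
      have := congrArg Complex.re key
      simpa [Complex.ext_iff, pow_two, Complex.mul_re, Complex.mul_im] using this
    have him : a * (x * y + y * x) + b * y = 0 := by
      have := congrArg Complex.im key
      simpa [Complex.ext_iff, pow_two, Complex.mul_re, Complex.mul_im] using this
    have hnorm : x ^ 2 + y ^ 2 ≤ 1 := by
      by_cases hy : y = 0
      · subst hy
        exfalso
        nlinarith [sq_nonneg (2 * a * x + b)]
      · have hbx : 2 * a * x + b = 0 := by
          have h0 : y * (2 * a * x + b) = 0 := by linear_combination him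
          rcases mul_eq_zero.mp h0 with h | h
          · exact absurd h hy
          · exact h
        have h1 : a * (1 - x ^ 2 - y ^ 2) = 0 := by linear_combination hre - x * hbx
        nlinarith
    have : ‖Complex.mk x y‖ ^ 2 ≤ 1 := by
      rw [← Complex.normSq_eq_norm_sq]
      simpa [Complex.normSq_mk, pow_two] using hnorm
    nlinarith [norm_nonneg (Complex.mk x y)]
  · intro u hu
    have hrec : ∀ n, a * u (n + 2) + b * u (n + 1) + a * u n = 0 := by
      intro n
      have h := hu n
      have := hτ2.ne'
      field_simp at h
      simp only [ha_def, hb_def]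
      nlinarith [h]
    set E : ℕ → ℝ := fun n => a * (u (n + 1) ^ 2 + u n ^ 2) + b * u (n + 1) * u n
      with hE_def
    have hEconst : ∀ n, E n = E 0 := by
      intro n
      induction n with
      | zero => rfl
      | succ k ih =>
        rw [← ih]
        simp only [hE_def]
        linear_combination (u (k + 2) - u k) * hrec k
    set δ : ℝ := a - |b| / 2 with hδ_def
    have habs : |b| < 2 * a := abs_lt.mpr ⟨by linarith, hb2⟩
    have hδ : 0 < δ := by simp only [hδ_def]; linarith
    have hEb : ∀ n, δ * u n ^ 2 ≤ E n := by
      intro n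
      simp only [hE_def, hδ_def]
      nlinarith [sq_nonneg (u (n + 1) + u n), sq_nonneg (u (n + 1) - u n),
        le_abs_self b, neg_abs_le b, sq_nonneg (u (n + 1)), abs_nonneg b]
    refine ⟨Real.sqrt (E 0 / δ), fun n => ?_⟩
    have h1 : u n ^ 2 ≤ E 0 / δ := by
      rw [le_div_iff₀ hδ]
      calc u n ^ 2 * δ = δ * u n ^ 2 := by ring
        _ ≤ E n := hEb n
        _ = E 0 := hEconst n
    calc |u n| = Real.sqrt (u n ^ 2) := (Real.sqrt_sq_eq_abs _).symm
      _ ≤ Real.sqrt (E 0 / δ) := Real.sqrt_le_sqrt h1
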